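/- arXiv:2104.14935 — 2 statements merged into one kernel-verified Lean document; each statement's English description precedes it below -/
import Mathlib

section
/- If G is a core graph with more than four vertices, then G contains no clique of four vertices and no independent set of four vertices; equivalently, a core graph cannot contain K4 or the complement of K4 as a proper induced subgraph. -/
open SimpleGraph

namespace TP

/-- A set of vertices is independent: no two of its vertices are adjacent. -/
def IsIndep {V : Type*} (G : SimpleGraph V) (S : Set V) : Prop :=
  S.Pairwise fun u v => ¬ G.Adj u v

/-- The finite vertex set `s` induces a cycle of length `n` in `G`. -/
def IsInducedCycle {V : Type*} (G : SimpleGraph V) (n : ℕ) (s : Finset V) : Prop :=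
  3 ≤ n ∧ s.card = n ∧ Nonempty (G.induce (s : Set V) ≃g SimpleGraph.cycleGraph n)

/-- The polytope `P(G)` given by nonnegativity, edge and odd-cycle inequalities. -/
def tPolytope {V : Type*} [Fintype V] (G : SimpleGraph V) : Set (V → ℝ) :=
  {x | (∀ v, 0 ≤ x v ∧ x v ≤ 1) ∧
    (∀ ⦃u v⦄, G.Adj u v → x u + x v ≤ 1) ∧
    (∀ (n : ℕ) (s : Finset V), Odd n → IsInducedCycle G n s →
      ∑ v ∈ s, x v ≤ ((n : ℝ) - 1) / 2)}

/-- The independent set polytope: the convex hull of characteristic vectors of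
independent sets. -/
def stabPolytope {V : Type*} [Fintype V] (G : SimpleGraph V) : Set (V → ℝ) :=
  convexHull ℝ {x | ∃ S : Set V, IsIndep G S ∧ x = S.indicator fun _ => (1 : ℝ)}

/-- A graph is t-perfect if `P(G)` equals its independent set polytope. -/
def TPerfect {V : Type*} [Fintype V] (G : SimpleGraph V) : Prop :=
  tPolytope G = stabPolytope G

/-- The graph obtained from `G` by a t-contraction at `v` : the closed neighbourhood
of `v` is replaced by a single new vertex (`none`), adjacent to every vertex that had
a neighbour in the closed neighbourhood of `v`. -/
def tContract {V : Type*} (G : SimpleGraph V) (v : V) :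
    SimpleGraph (Option {w : V // w ≠ v ∧ ¬ G.Adj v w}) :=
  SimpleGraph.fromRel fun a b =>
    match a, b with
    | some a, some b => G.Adj a.1 b.1
    | some a, none => ∃ x, (x = v ∨ G.Adj v x) ∧ G.Adj a.1 x
    | none, _ => False

/-- A bundled finite simple graph. -/
structure FinGraph : Type 1 where
  V : Type
  [fintype : Fintype V]
  graph : SimpleGraph V

attribute [instance] FinGraph.fintype

def FinGraph.of {V : Type} [Fintype V] (G : SimpleGraph V) : FinGraph :=
  FinGraph.mk V G

/-- `B` is obtained from `A` by deleting one vertex (up to isomorphism). -/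
def DeleteStep (A B : FinGraph) : Prop :=
  ∃ v : A.V, Nonempty (B.graph ≃g A.graph.induce {w | w ≠ v})

/-- `B` is obtained from `A` by a t-contraction at a vertex whose neighbourhood is
independent (up to isomorphism). -/
def ContractStep (A B : FinGraph) : Prop :=
  ∃ v : A.V, IsIndep A.graph (A.graph.neighborSet v) ∧
    Nonempty (B.graph ≃g tContract A.graph v)

/-- One step: a vertex deletion or a t-contraction. -/
def Step (A B : FinGraph) : Prop := DeleteStep A B ∨ ContractStep A B

/-- `TMinor B A` : `B` is a t-minor of `A`, i.e. obtained from `A` by a sequence of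
vertex deletions and t-contractions. -/
def TMinor (B A : FinGraph) : Prop := Relation.ReflTransGen Step A B

/-- `B` is a proper t-minor of `A` : a t-minor with fewer vertices. -/
def ProperTMinor (B A : FinGraph) : Prop :=
  TMinor B A ∧ Fintype.card B.V < Fintype.card A.V

/-- A graph is minimally t-imperfect if it is not t-perfect but every proper t-minor
of it is t-perfect. -/
def MinimallyTImperfect {V : Type} [Fintype V] (G : SimpleGraph V) : Prop :=
  ¬ TPerfect G ∧ ∀ B : FinGraph, ProperTMinor B (FinGraph.of G) → TPerfect B.graph

/-- A core graph: every proper t-minor of `G` and every proper t-minor of its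
complement is t-perfect. -/
def IsCore {V : Type} [Fintype V] (G : SimpleGraph V) : Prop :=
  (∀ B : FinGraph, ProperTMinor B (FinGraph.of G) → TPerfect B.graph) ∧
  (∀ B : FinGraph, ProperTMinor B (FinGraph.of Gᶜ) → TPerfect B.graph)

/-- A partition of `V \ {v}` into `count` sets of size `size`, all satisfying `P`. -/
def CoverOff {V : Type*} (v : V) (count size : ℕ) (P : Finset V → Prop) : Prop :=
  ∃ f : Fin count → Finset V,
    (∀ i, P (f i) ∧ (f i).card = size) ∧
    (∀ i j, i ≠ j → Disjoint (f i) (f j)) ∧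
    (∀ i, v ∉ f i) ∧
    (∀ w, w ≠ v → ∃ i, w ∈ f i)

/-- `(p,q)`-partitionable graphs. -/
def PQPartitionable {V : Type*} [Fintype V] (G : SimpleGraph V) (p q : ℕ) : Prop :=
  2 ≤ p ∧ 2 ≤ q ∧ Fintype.card V = p * q + 1 ∧
  ∀ v : V,
    CoverOff v q p (fun S => IsIndep G (S : Set V)) ∧
    CoverOff v p q (fun S => G.IsClique (S : Set V))

/-- `G` has an odd hole: an induced odd cycle of length at least five. -/
def HasOddHole {V : Type*} (G : SimpleGraph V) : Prop :=
  ∃ (n : ℕ) (s : Finset V), Odd n ∧ 5 ≤ n ∧ IsInducedCycle G n s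

/-- A graph is perfect iff neither it nor its complement has an odd hole. -/
def GPerfect {V : Type*} (G : SimpleGraph V) : Prop :=
  ¬ HasOddHole G ∧ ¬ HasOddHole Gᶜ

/-- Every vertex has degree at least three and at most five. -/
def DegreeBounded {V : Type*} (G : SimpleGraph V) : Prop :=
  ∀ v, 3 ≤ (G.neighborSet v).ncard ∧ (G.neighborSet v).ncard ≤ 5

/-- The `n`-wheel: an `n`-cycle plus a vertex (`none`) adjacent to every cycle vertex. -/
def wheel (n : ℕ) : SimpleGraph (Option (Fin n)) :=
  SimpleGraph.fromRel fun a b =>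
    match a, b with
    | some i, some j => (SimpleGraph.cycleGraph n).Adj i j
    | none, some _ => True
    | _, none => False

/-- Vertex type of the standard 9-vertex labeling: `inl i` is `v_{i+1}`,
`inr j` is `u_{j+1}`. -/
abbrev V9 := Fin 5 ⊕ Fin 4

/-- Vertex type of the standard 10-vertex labeling. -/
abbrev V10 := Fin 5 ⊕ Fin 5

/-- The standard 9-vertex labeling: `v1 … v5` form a 5-hole; the neighbours of `u_i`
among the `v`'s are `v_{i+2}` and `v_{i+3}` together possibly with `v_i`. -/
def Std9 (G : SimpleGraph V9) : Prop :=
  (∀ i j : Fin 5, G.Adj (.inl i) (.inl j) ↔ (j = i + 1 ∨ i = j + 1)) ∧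
  (∀ (i : Fin 4) (k : Fin 5), G.Adj (.inr i) (.inl k) →
    k = i.castSucc + 2 ∨ k = i.castSucc + 3 ∨ k = i.castSucc) ∧
  (∀ i : Fin 4, G.Adj (.inr i) (.inl (i.castSucc + 2)) ∧ G.Adj (.inr i) (.inl (i.castSucc + 3)))

/-- The standard 10-vertex labeling. -/
def Std10 (G : SimpleGraph V10) : Prop :=
  (∀ i j : Fin 5, G.Adj (.inl i) (.inl j) ↔ (j = i + 1 ∨ i = j + 1)) ∧
  (∀ (i k : Fin 5), G.Adj (.inr i) (.inl k) → k = i + 2 ∨ k = i + 3 ∨ k = i) ∧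
  (∀ i : Fin 5, G.Adj (.inr i) (.inl (i + 2)) ∧ G.Adj (.inr i) (.inl (i + 3)))

/-- The 9-vertex graph of the standard labeling with prescribed `U`-edges and
prescribed extra edges `u_i v_i`. -/
def graph9 (uEdges : List (Fin 4 × Fin 4)) (extra : List (Fin 4)) : SimpleGraph V9 :=
  SimpleGraph.fromRel fun a b =>
    match a, b with
    | .inl i, .inl j => j = i + 1
    | .inr i, .inl k => k = i.castSucc + 2 ∨ k = i.castSucc + 3 ∨ (i ∈ extra ∧ k = i.castSucc)
    | .inl _, .inr _ => False
    | .inr i, .inr j => (i, j) ∈ uEdges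

/-- The 10-vertex graph of the standard labeling with prescribed `U`-edges and
prescribed extra edges `u_i v_i`. -/
def graph10 (uEdges : List (Fin 5 × Fin 5)) (extra : List (Fin 5)) : SimpleGraph V10 :=
  SimpleGraph.fromRel fun a b =>
    match a, b with
    | .inl i, .inl j => j = i + 1
    | .inr i, .inl k => k = i + 2 ∨ k = i + 3 ∨ (i ∈ extra ∧ k = i)
    | .inl _, .inr _ => False
    | .inr i, .inr j => (i, j) ∈ uEdges

/-- The graph `(12°435°1)`. -/
def G12435 : SimpleGraph V10 :=
  graph10 [(0,1),(1,3),(3,2),(2,4),(4,0)] [1,4]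

/-- The graph `(1°2°435°1°)`. -/
def G12435' : SimpleGraph V10 :=
  graph10 [(0,1),(1,3),(3,2),(2,4),(4,0)] [0,1,4]


open Classical in
lemma clique_sum_le_one {V : Type} [Fintype V] (G : SimpleGraph V)
    (S : Finset V) (hS : G.IsClique (S : Set V)) {x : V → ℝ}
    (hx : x ∈ stabPolytope G) : ∑ v ∈ S, x v ≤ 1 := by
  have hconv : Convex ℝ {x : V → ℝ | ∑ v ∈ S, x v ≤ 1} := by
    refine convex_halfSpace_le (f := fun x : V → ℝ => ∑ v ∈ S, x v) ?_ 1
    exact ⟨fun a b => by simp [Finset.sum_add_distrib], fun c a => by simp [Finset.mul_sum]⟩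
  refine convexHull_min ?_ hconv hx
  rintro y ⟨T, hT, rfl⟩
  have h1 : ∑ v ∈ S, T.indicator (fun _ => (1:ℝ)) v
      = ((S.filter (fun v => v ∈ T)).card : ℝ) := by
    rw [← Finset.sum_boole]
    exact Finset.sum_congr rfl fun v _ => by rw [Set.indicator_apply]
  have h2 : (S.filter (fun v => v ∈ T)).card ≤ 1 := by
    refine Finset.card_le_one.mpr fun a ha b hb => ?_
    simp only [Finset.mem_filter] at ha hb
    by_contra hne
    exact hT ha.2 hb.2 hne (hS ha.1 hb.1 hne)
  show ∑ v ∈ S, T.indicator (fun _ => (1:ℝ)) v ≤ 1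
  rw [h1]
  exact_mod_cast h2

open Classical in
lemma notTPerfect_of_clique4 {V : Type} [Fintype V] (G : SimpleGraph V)
    (S : Finset V) (h4 : S.card = 4) (hS : G.IsClique (S : Set V)) :
    ¬ TPerfect G := by
  intro hT
  set x : V → ℝ := fun v => if v ∈ S then 1/3 else 0 with hxdef
  have hx3 : ∀ v, x v ≤ 1/3 := by
    intro v; simp only [hxdef]; split <;> norm_num
  have hx0 : ∀ v, 0 ≤ x v := by
    intro v; simp only [hxdef]; split <;> norm_num
  have hxP : x ∈ tPolytope G := by
    refine ⟨fun v => ⟨hx0 v, le_trans (hx3 v) (by norm_num)⟩,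
      fun u v _ => by linarith [hx3 u, hx3 v],
      fun n s hodd hcyc => ?_⟩
    have h3 : (3:ℝ) ≤ n := by exact_mod_cast hcyc.1
    have hcard : (s.card : ℝ) = n := by exact_mod_cast hcyc.2.1
    have hle : ∑ v ∈ s, x v ≤ ∑ v ∈ s, (1/3 : ℝ) :=
      Finset.sum_le_sum fun v _ => hx3 v
    rw [Finset.sum_const, nsmul_eq_mul] at hle
    rw [hcard] at hle
    linarith
  have hsum : ∑ v ∈ S, x v = 4/3 := by
    have : ∑ v ∈ S, x v = ∑ v ∈ S, (1/3 : ℝ) :=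
      Finset.sum_congr rfl fun v hv => by simp [hxdef, hv]
    rw [this, Finset.sum_const, h4, nsmul_eq_mul]
    norm_num
  have hle1 : ∑ v ∈ S, x v ≤ 1 :=
    clique_sum_le_one G S hS (hT ▸ hxP)
  rw [hsum] at hle1
  linarith

lemma no_clique4 {V : Type} [Fintype V] (G : SimpleGraph V)
    (hc : ∀ B : FinGraph, ProperTMinor B (FinGraph.of G) → TPerfect B.graph)
    (hn : 4 < Fintype.card V) :
    ¬ ∃ S : Finset V, S.card = 4 ∧ G.IsClique (S : Set V) := by
  rintro ⟨S, h4, hS⟩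
  have hv : ∃ v : V, v ∉ S := by
    by_contra h
    push_neg at h
    have : S = Finset.univ := Finset.eq_univ_iff_forall.mpr h
    rw [this, Finset.card_univ] at h4
    omega
  obtain ⟨v, hv⟩ := hv
  letI : Fintype ↥{w : V | w ≠ v} := Set.Finite.fintype (Set.toFinite _)
  set B : FinGraph := FinGraph.mk ↥{w : V | w ≠ v} (G.induce {w : V | w ≠ v}) with hB
  have hstep : Step (FinGraph.of G) B := Or.inl ⟨v, ⟨Iso.refl⟩⟩
  have hcard : Fintype.card B.V < Fintype.card V := by
    have : Function.Injective (fun a : B.V => (a : V)) := Subtype.val_injective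
    refine Fintype.card_lt_of_injective_of_notMem _ this (b := v) ?_
    rintro ⟨⟨w, hw⟩, hwv⟩
    exact hw hwv
  have hTP : TPerfect B.graph :=
    hc B ⟨Relation.ReflTransGen.single hstep, hcard⟩
  -- build the 4-clique inside B
  have hmemne : ∀ w ∈ S, w ≠ v := fun w hw h => hv (h ▸ hw)
  set e : {w // w ∈ S} ↪ ↥{w : V | w ≠ v} :=
    ⟨fun w => ⟨w.1, hmemne w.1 w.2⟩, fun a b h => by have h2 := congrArg Subtype.val h; exact Subtype.ext h2⟩ with he
  set S' : Finset ↥{w : V | w ≠ v} := S.attach.map e with hS'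
  have hS'card : S'.card = 4 := by
    rw [hS', Finset.card_map, Finset.card_attach, h4]
  have hS'clique : B.graph.IsClique (S' : Set ↥{w : V | w ≠ v}) := by
    intro a ha b hb hab
    simp only [hS', Finset.coe_map, Set.mem_image, Finset.mem_coe, Finset.mem_attach] at ha hb
    obtain ⟨wa, -, rfl⟩ := ha
    obtain ⟨wb, -, rfl⟩ := hb
    obtain ⟨a0, ha0⟩ := wa
    obtain ⟨b0, hb0⟩ := wb
    have hne : a0 ≠ b0 := fun h => hab (by simp [he]; exact h)
    exact hS ha0 hb0 hne
  exact notTPerfect_of_clique4 B.graph S' hS'card hS'clique hTP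


/-- a core graph on more than four vertices contains no clique of four
vertices and no independent set of four vertices. -/

theorem stmt3 {V : Type} [Fintype V] (G : SimpleGraph V)
    (hc : IsCore G) (hn : 4 < Fintype.card V) :
    (¬ ∃ S : Finset V, S.card = 4 ∧ G.IsClique (S : Set V)) ∧
    (¬ ∃ S : Finset V, S.card = 4 ∧ IsIndep G (S : Set V)) := by
  obtain ⟨hc1, hc2⟩ := hc
  constructor
  · exact no_clique4 G hc1 hn
  · rintro ⟨S, h4, hSind⟩
    refine no_clique4 Gᶜ hc2 hn ⟨S, h4, ?_⟩
    intro a ha b hb hab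
    exact ⟨hab, hSind ha hb hab⟩


end TP
end

section
/- Let G be a core graph and let C be a 5-hole in G. Then every two consecutive (adjacent) vertices of C have at most one common neighbor in G. -/
open SimpleGraph

namespace TP

/-!
Label the hole `p 0, …, p 4` with `a = p 0`, `b = p 1`, and let `x ≠ y` be common neighbours
of `a` and `b`; neither lies on the hole. If `x` were adjacent to `p 2`, then `x` and the hole
would induce a 5-cycle with an apex seeing three consecutive vertices, a t-imperfect graph,
and a proper t-minor of `G` since it misses `y`. Reflecting the hole, `x` and `y` also miss
`p 4`. Then `{a, b, x, y}` is a `K₄` of `G` when `x ~ y` and `{x, y, p 2, p 4}` is a `K₄` of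
`Gᶜ` otherwise; as `K₄` is t-imperfect, this contradicts `G` being a core graph.
-/

lemma not_tPerfect_of_separation {W : Type*} [Fintype W] {K : SimpleGraph W} {x : W → ℝ}
    (hx : x ∈ tPolytope K) (c : W → ℝ) (r : ℝ)
    (hstab : ∀ S : Finset W, IsIndep K S → ∑ v ∈ S, c v ≤ r)
    (hviol : r < ∑ v, c v * x v) : ¬ TPerfect K := by
  classical
  intro htp
  have hlin : IsLinearMap ℝ fun y : W → ℝ => ∑ v, c v * y v :=
    ⟨fun y z => by simp [mul_add, Finset.sum_add_distrib],
      fun t y => by simp [Finset.mul_sum, mul_left_comm]⟩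
  have hsub : {y | ∃ S : Set W, IsIndep K S ∧ y = S.indicator fun _ => (1 : ℝ)} ⊆
      {y | ∑ v, c v * y v ≤ r} := by
    rintro _ ⟨S, hS, rfl⟩
    have := hstab (Finset.univ.filter (· ∈ S)) (by simpa using hS)
    simpa [Set.indicator_apply, Finset.sum_ite] using this
  have := convexHull_min hsub (convex_halfSpace_le hlin r) (htp ▸ hx)
  exact (lt_irrefl r) (hviol.trans_le this)

lemma isClique_of_isInducedCycle_three {V : Type*} {G : SimpleGraph V} {s : Finset V}
    (hs : IsInducedCycle G 3 s) : G.IsClique (s : Set V) := by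
  obtain ⟨-, -, ⟨e⟩⟩ := hs
  intro u hu v hv huv
  have hcycle : ∀ i j : Fin 3, i ≠ j → (cycleGraph 3).Adj i j := by decide
  exact e.map_adj_iff.mp (hcycle _ _ (e.injective.ne (a₁ := ⟨u, hu⟩) (a₂ := ⟨v, hv⟩)
    fun h => huv (congrArg Subtype.val h)))

lemma div_three_mem_tPolytope {W : Type*} [Fintype W] (K : SimpleGraph W) (q : W → ℕ)
    (hcard : Fintype.card W ≤ 6) (hq : ∀ v, q v ≤ 3)
    (hedge : ∀ u v, K.Adj u v → q u + q v ≤ 3)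
    (htri : ∀ a b d, K.Adj a b → K.Adj a d → K.Adj b d → q a + q b + q d ≤ 3)
    (h5 : ∀ s : Finset W, s.card = 5 → ∑ v ∈ s, q v ≤ 6) :
    (fun v => (q v : ℝ) / 3) ∈ tPolytope K := by
  refine ⟨fun v => ⟨by positivity, ?_⟩, fun u v huv => ?_, ?_⟩
  · have : (q v : ℝ) ≤ 3 := mod_cast hq v
    linarith
  · have : (q u : ℝ) + q v ≤ 3 := mod_cast hedge u v huv
    linarith
  rintro n s hodd hs
  show ∑ v ∈ s, (q v : ℝ) / 3 ≤ _
  rw [← Finset.sum_div]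
  have hn : n ≤ 6 := hs.2.1 ▸ s.card_le_univ.trans hcard
  obtain rfl | rfl : n = 3 ∨ n = 5 := by obtain ⟨m, rfl⟩ := hodd; have := hs.1; omega
  · classical
    obtain ⟨a, b, d, hab, had, hbd, hsabd⟩ := Finset.card_eq_three.mp hs.2.1
    have hK := isClique_of_isInducedCycle_three hs
    have hmem : a ∈ (s : Set W) ∧ b ∈ (s : Set W) ∧ d ∈ (s : Set W) := by simp [hsabd]
    have : ∑ v ∈ s, q v ≤ 3 := by
      rw [hsabd, Finset.sum_insert (by simp [hab, had]), Finset.sum_pair hbd, ← add_assoc]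
      exact htri a b d (hK hmem.1 hmem.2.1 hab) (hK hmem.1 hmem.2.2 had)
        (hK hmem.2.1 hmem.2.2 hbd)
    have : ∑ v ∈ s, (q v : ℝ) ≤ 3 := mod_cast this
    norm_num; linarith
  · have : ∑ v ∈ s, (q v : ℝ) ≤ 6 := mod_cast h5 s hs.2.1
    norm_num; linarith

/-- Certificates are scaled by `3` so that `decide` can check them: the point is `q / 3` and the
violated inequality is `∑ c v * x v ≤ r`. -/
lemma not_tPerfect_of_certificate {W : Type*} [Fintype W] (K : SimpleGraph W)
    (q c : W → ℕ) (r : ℕ)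
    (hcard : Fintype.card W ≤ 6) (hq : ∀ v, q v ≤ 3)
    (hedge : ∀ u v, K.Adj u v → q u + q v ≤ 3)
    (htri : ∀ a b d, K.Adj a b → K.Adj a d → K.Adj b d → q a + q b + q d ≤ 3)
    (h5 : ∀ s : Finset W, s.card = 5 → ∑ v ∈ s, q v ≤ 6)
    (hstab : ∀ S : Finset W, (∀ u ∈ S, ∀ v ∈ S, ¬ K.Adj u v) → ∑ v ∈ S, c v ≤ r)
    (hviol : 3 * r < ∑ v, c v * q v) : ¬ TPerfect K := by
  refine not_tPerfect_of_separation (div_three_mem_tPolytope K q hcard hq hedge htri h5)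
    (fun v => c v) r (fun S hS => ?_) ?_
  · have := hstab S fun u hu v hv => by
      obtain rfl | huv := eq_or_ne u v
      exacts [K.irrefl, hS hu hv huv]
    exact_mod_cast this
  · have : ((3 * r : ℕ) : ℝ) < ((∑ v, c v * q v : ℕ) : ℝ) := mod_cast hviol
    push_cast at this
    have : ∑ v, (c v : ℝ) * ((q v : ℝ) / 3) = (∑ v, (c v : ℝ) * q v) / 3 := by
      rw [Finset.sum_div]; simp [mul_div_assoc]
    linarith

lemma not_tPerfect_top_fin_four : ¬ TPerfect (⊤ : SimpleGraph (Fin 4)) :=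
  not_tPerfect_of_certificate _ (fun _ => 1) (fun _ => 1) 1 (by decide) (by decide) (by decide)
    (by decide) (by decide) (by decide) (by decide)

lemma tMinor_of_iso_induce {V : Type} [Fintype V] (G : SimpleGraph V) {S : Set V}
    (hS : S ≠ Set.univ) (H : FinGraph) (e : H.graph ≃g G.induce S) :
    TMinor H (FinGraph.of G) := by
  classical
  induction hn : Fintype.card V using Nat.strong_induction_on generalizing V with
  | _ n ih =>
  obtain ⟨v, hv⟩ := (Set.ne_univ_iff_exists_notMem S).mp hS
  have hdel : Step (FinGraph.of G) (FinGraph.of (G.induce {w | w ≠ v})) :=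
    Or.inl ⟨v, ⟨Iso.refl⟩⟩
  by_cases hSv : S = {w | w ≠ v}
  · subst hSv
    exact .single (Or.inl ⟨v, ⟨e⟩⟩)
  have hSsub : ∀ w ∈ S, w ≠ v := fun w hw hwv => hv (hwv ▸ hw)
  let S' : Set {w : V // w ≠ v} := {w | w.1 ∈ S}
  have e' : (G.induce {w | w ≠ v}).induce S' ≃g G.induce S :=
    ⟨⟨fun w => ⟨w.1.1, w.2⟩, fun w => ⟨⟨w.1, hSsub w.1 w.2⟩, w.2⟩,
      fun _ => rfl, fun _ => rfl⟩,
      Iff.rfl⟩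
  have hS' : S' ≠ Set.univ := fun h => hSv <| Set.ext fun w =>
    ⟨hSsub w, fun hw => (h ▸ Set.mem_univ _ : (⟨w, hw⟩ : {w // w ≠ v}) ∈ S')⟩
  have hcard : Fintype.card {w : V // w ≠ v} < n :=
    hn ▸ Fintype.card_subtype_lt (p := (· ≠ v)) (x := v) (by simp)
  exact .head hdel (ih _ hcard _ hS' (e.trans e'.symm) rfl)

lemma tPerfect_of_embedding {V W : Type} [Fintype V] [Fintype W] {G : SimpleGraph V}
    (htp : ∀ B : FinGraph, ProperTMinor B (FinGraph.of G) → TPerfect B.graph)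
    {P : SimpleGraph W} (f : P ↪g G) (hf : ¬ Function.Surjective f) : TPerfect P := by
  have hrange : Set.range f ≠ Set.univ := fun h => hf (Set.range_eq_univ.mp h)
  exact htp (FinGraph.of P)
    ⟨tMinor_of_iso_induce G hrange (FinGraph.of P) f.isoInduceRange,
      Fintype.card_lt_of_injective_not_surjective f f.injective hf⟩

def coneOver {W : Type*} (H : SimpleGraph W) (N : Set W) : SimpleGraph (Option W) where
  Adj
    | some k, some l => H.Adj k l
    | none, some l => l ∈ N
    | some k, none => k ∈ N
    | none, none => False
  symm := ⟨by rintro (_ | k) (_ | l) <;> simp [H.adj_comm]⟩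
  loopless := ⟨by rintro (_ | k) <;> simp⟩

instance {W : Type*} (H : SimpleGraph W) (N : Set W) [DecidableRel H.Adj]
    [DecidablePred (· ∈ N)] : DecidableRel (coneOver H N).Adj
  | some k, some l => inferInstanceAs (Decidable (H.Adj k l))
  | none, some l => inferInstanceAs (Decidable (l ∈ N))
  | some k, none => inferInstanceAs (Decidable (k ∈ N))
  | none, none => inferInstanceAs (Decidable False)

def coneEmbedding {V W : Type*} {H : SimpleGraph W} {G : SimpleGraph V} (p : H ↪g G) (z : V)
    (hz : z ∉ Set.range p) : coneOver H {k | G.Adj z (p k)} ↪g G where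
  toFun o := o.elim z p
  inj' := by
    rintro (_ | k) (_ | l) h
    · rfl
    · exact absurd ⟨l, h.symm⟩ hz
    · exact absurd ⟨k, h⟩ hz
    · exact congrArg some (p.injective h)
  map_rel_iff' := by
    rintro (_ | k) (_ | l)
    · simp [coneOver]
    · rfl
    · exact G.adj_comm _ _
    · exact p.map_adj_iff

lemma range_coneEmbedding {V W : Type*} {H : SimpleGraph W} {G : SimpleGraph V} (p : H ↪g G)
    (z : V) (hz : z ∉ Set.range p) :
    Set.range (coneEmbedding p z hz) = insert z (Set.range p) :=
  Option.range_elim z p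

lemma not_tPerfect_coneOver_cycleGraph_five {N : Set (Fin 5)} (hN : {0, 1, 2} ⊆ N) :
    ¬ TPerfect (coneOver (cycleGraph 5) N) := by
  obtain ⟨M, rfl⟩ := N.toFinite.exists_finset_coe
  have hM : M = {0, 1, 2} ∨ M = {0, 1, 2, 3} ∨ M = {0, 1, 2, 4} ∨ M = Finset.univ := by
    simp only [Set.insert_subset_iff, Set.singleton_subset_iff, Finset.mem_coe] at hN
    revert M; decide
  -- A cycle vertex missed by the apex gets weight `2/3`;
  -- the 5-wheel is cut off by `2 x_apex + ∑ x_k ≤ 2` at the point `1/3`.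
  rcases hM with rfl | rfl | rfl | rfl
  · exact not_tPerfect_of_certificate _ (fun v => if v = some 3 then 2 else 1) (fun _ => 1) 2
      (by decide) (by decide) (by decide) (by decide) (by decide) (by decide) (by decide)
  · exact not_tPerfect_of_certificate _ (fun v => if v = some 4 then 2 else 1) (fun _ => 1) 2
      (by decide) (by decide) (by decide) (by decide) (by decide) (by decide) (by decide)
  · exact not_tPerfect_of_certificate _ (fun v => if v = some 3 then 2 else 1) (fun _ => 1) 2
      (by decide) (by decide) (by decide) (by decide) (by decide) (by decide) (by decide)
  · exact not_tPerfect_of_certificate _ (fun _ => 1) (fun v => if v = none then 2 else 1) 2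
      (by decide) (by decide) (by decide) (by decide) (by decide) (by decide) (by decide)

/-- `k ↦ i + (j - i) * k` is a rotation or reflection of the 5-cycle since `j - i = ±1`. -/
def cycleGraphFiveAffine (i j : Fin 5) (hij : (cycleGraph 5).Adj i j) :
    cycleGraph 5 ↪g cycleGraph 5 where
  toFun k := i + (j - i) * k
  inj' k l hkl := by revert i j k l; decide
  map_rel_iff' {k l} := by revert i j k l; decide

@[simp]
lemma cycleGraphFiveAffine_apply (i j : Fin 5) (hij : (cycleGraph 5).Adj i j) (k : Fin 5) :
    cycleGraphFiveAffine i j hij k = i + (j - i) * k :=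
  rfl

lemma exists_cycleGraph_five_embedding {V : Type} {G : SimpleGraph V} {s : Finset V}
    (hs : IsInducedCycle G 5 s) {a b : V} (ha : a ∈ s) (hb : b ∈ s) (hab : G.Adj a b) :
    ∃ p : cycleGraph 5 ↪g G, p 0 = a ∧ p 1 = b := by
  obtain ⟨-, -, ⟨e⟩⟩ := hs
  let q : cycleGraph 5 ↪g G := (Embedding.induce (s : Set V)).comp e.symm.toEmbedding
  have hq : ∀ v : (s : Set V), q (e v) = v := fun v => by simp [q]
  have hij : (cycleGraph 5).Adj (e ⟨a, ha⟩) (e ⟨b, hb⟩) := e.map_adj_iff.mpr hab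
  refine ⟨q.comp (cycleGraphFiveAffine _ _ hij), ?_, ?_⟩
  · simpa using hq ⟨a, ha⟩
  · simpa using hq ⟨b, hb⟩

lemma notMem_range_of_adj_of_adj {V : Type} {G : SimpleGraph V} (p : cycleGraph 5 ↪g G)
    {z : V} (hz0 : G.Adj (p 0) z) (hz1 : G.Adj (p 1) z) : z ∉ Set.range p := by
  rintro ⟨k, rfl⟩
  rw [p.map_adj_iff] at hz0 hz1
  revert k; decide

lemma not_adj_two_of_adj_of_adj {V : Type} [Fintype V] {G : SimpleGraph V}
    (htp : ∀ B : FinGraph, ProperTMinor B (FinGraph.of G) → TPerfect B.graph)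
    (p : cycleGraph 5 ↪g G) {z w : V} (hz0 : G.Adj (p 0) z) (hz1 : G.Adj (p 1) z)
    (hw : w ∉ Set.range p) (hwz : w ≠ z) : ¬ G.Adj z (p 2) := by
  intro hz2
  have hz := notMem_range_of_adj_of_adj p hz0 hz1
  have hN : {0, 1, 2} ⊆ {k | G.Adj z (p k)} := by
    simp [Set.insert_subset_iff, hz0.symm, hz1.symm, hz2]
  refine not_tPerfect_coneOver_cycleGraph_five hN
    (tPerfect_of_embedding htp (coneEmbedding p z hz) fun hsurj => ?_)
  have := range_coneEmbedding p z hz ▸ Set.range_eq_univ.mpr hsurj ▸ Set.mem_univ w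
  exact this.elim hwz hw

lemma not_adj_four_of_adj_of_adj {V : Type} [Fintype V] {G : SimpleGraph V}
    (htp : ∀ B : FinGraph, ProperTMinor B (FinGraph.of G) → TPerfect B.graph)
    (p : cycleGraph 5 ↪g G) {z w : V} (hz0 : G.Adj (p 0) z) (hz1 : G.Adj (p 1) z)
    (hw : w ∉ Set.range p) (hwz : w ≠ z) : ¬ G.Adj z (p 4) := by
  let p' := p.comp (cycleGraphFiveAffine 1 0 (by decide))
  have hp' : p' 0 = p 1 ∧ p' 1 = p 0 ∧ p' 2 = p 4 := ⟨rfl, rfl, rfl⟩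
  have hw' : w ∉ Set.range p' := fun h => hw (Set.range_comp_subset_range _ _ h)
  exact hp'.2.2 ▸ not_adj_two_of_adj_of_adj htp p' (hp'.1 ▸ hz1) (hp'.2.1 ▸ hz0) hw' hwz

lemma cliqueFree_four_of_tPerfect_minors {V : Type} [Fintype V] {G : SimpleGraph V}
    (htp : ∀ B : FinGraph, ProperTMinor B (FinGraph.of G) → TPerfect B.graph)
    (hV : 4 < Fintype.card V) : G.CliqueFree 4 := fun _ hs =>
  not_tPerfect_top_fin_four <| tPerfect_of_embedding htp
    (topEmbeddingOfNotCliqueFree hs.not_cliqueFree) fun hsurj =>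
      (Fintype.card_le_of_surjective _ hsurj).not_gt (by simpa using hV)

/-- in a core graph, two consecutive vertices of a 5-hole have at most
one common neighbour. -/
theorem stmt6 {V : Type} [Fintype V] (G : SimpleGraph V)
    (hc : IsCore G) (s : Finset V) (hs : IsInducedCycle G 5 s)
    (a b : V) (ha : a ∈ s) (hb : b ∈ s) (hab : G.Adj a b) :
    {w : V | G.Adj a w ∧ G.Adj b w}.ncard ≤ 1 := by
  classical
  obtain ⟨p, rfl, rfl⟩ := exists_cycleGraph_five_embedding hs ha hb hab
  by_contra! hcard
  obtain ⟨x, y, ⟨hx0, hx1⟩, ⟨hy0, hy1⟩, hxy⟩ :=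
    (Set.one_lt_ncard_iff (Set.toFinite _)).mp hcard
  have hx := notMem_range_of_adj_of_adj p hx0 hx1
  have hy := notMem_range_of_adj_of_adj p hy0 hy1
  have hV : 4 < Fintype.card V := by
    have := Fintype.card_lt_of_injective_not_surjective p p.injective fun h => hx (h x)
    simp only [Fintype.card_fin] at this
    omega
  have hx2 := not_adj_two_of_adj_of_adj hc.1 p hx0 hx1 hy hxy.symm
  have hx4 := not_adj_four_of_adj_of_adj hc.1 p hx0 hx1 hy hxy.symm
  have hy2 := not_adj_two_of_adj_of_adj hc.1 p hy0 hy1 hx hxy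
  have hy4 := not_adj_four_of_adj_of_adj hc.1 p hy0 hy1 hx hxy
  by_cases hxy' : G.Adj x y
  · refine cliqueFree_four_of_tPerfect_minors hc.1 hV {p 0, p 1, x, y}
      ((is3Clique_triple_iff.mpr ⟨hx1, hy1, hxy'⟩).insert ?_)
    simp [hab, hx0, hy0]
  · have hne : ∀ {z} k, z ∉ Set.range p → z ≠ p k := fun k hz h => hz ⟨k, h.symm⟩
    have h24 : Gᶜ.Adj (p 2) (p 4) := by
      simp only [compl_adj, p.map_adj_iff, ne_eq, p.injective.eq_iff]; decide
    refine cliqueFree_four_of_tPerfect_minors hc.2 hV {x, y, p 2, p 4}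
      (((is3Clique_triple_iff (G := Gᶜ)).mpr
        ⟨⟨hne 2 hy, hy2⟩, ⟨hne 4 hy, hy4⟩, h24⟩).insert ?_)
    simp [hxy, hxy', hx2, hx4, hne 2 hx, hne 4 hx]

end TP
end
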